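/- arXiv:2201.04262 — 3 statements merged into one kernel-verified Lean document; each statement's English description precedes it below -/
import Mathlib

section
/- Let X, Y be real Banach spaces and T : X × Y ⇉ X a lower semicontinuous set-valued map. Then the set-valued map 𝒩_T : X × Y ⇉ X* defined by 𝒩_T(x,y) := N_{T(x,y)}(x) has closed graph. -/
/-- If `T : X × Y ⇉ X` is lower semicontinuous, then the map
`𝒩_T(x,y) := N_{T(x,y)}(x) = {x* : ⟨x*, z - x⟩ ≤ 0 ∀ z ∈ T(x,y)}` has closed graph. -/
theorem normal_cone_map_closed {X Y : Type*} [NormedAddCommGroup X] [NormedSpace ℝ X]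
    [CompleteSpace X] [NormedAddCommGroup Y] [NormedSpace ℝ Y] [CompleteSpace Y]
    (T : X × Y → Set X)
    (hT : ∀ p : X × Y, ∀ V : Set X, IsOpen V → (T p ∩ V).Nonempty →
      ∃ U ∈ nhds p, ∀ q ∈ U, (T q ∩ V).Nonempty) :
    IsClosed {q : (X × Y) × (X →L[ℝ] ℝ) | ∀ z ∈ T q.1, q.2 (z - q.1.1) ≤ 0} := by
  rw [← isOpen_compl_iff, isOpen_iff_mem_nhds]
  rintro ⟨p, f⟩ hpf
  simp only [Set.mem_compl_iff, Set.mem_setOf_eq, not_forall, not_le] at hpf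
  obtain ⟨z, hz, hc⟩ := hpf
  set c := f (z - p.1) with hcdef
  set δ := c / (4 * (‖f‖ + 1)) with hδ
  have hfn : (0:ℝ) ≤ ‖f‖ := norm_nonneg f
  have hδpos : 0 < δ := by positivity
  set M := ‖z - p.1‖ + 2 * δ with hM
  have hMnn : (0:ℝ) ≤ M := by positivity
  set ε := c / (4 * (M + 1)) with hε
  have hεpos : 0 < ε := by positivity
  obtain ⟨U, hU, hUV⟩ := hT p (Metric.ball z δ) Metric.isOpen_ball
    ⟨z, hz, Metric.mem_ball_self hδpos⟩
  have key : ((U ∩ Metric.ball p δ) ×ˢ Metric.ball f ε) ∈ nhds (p, f) := by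
    rw [nhds_prod_eq]
    apply Filter.prod_mem_prod
    · exact Filter.inter_mem hU (Metric.ball_mem_nhds p hδpos)
    · exact Metric.ball_mem_nhds f hεpos
  refine Filter.mem_of_superset key ?_
  rintro ⟨q, g⟩ ⟨⟨hqU, hqb⟩, hgb⟩
  obtain ⟨w, hwT, hwb⟩ := hUV q hqU
  simp only [Set.mem_compl_iff, Set.mem_setOf_eq, not_forall, not_le]
  refine ⟨w, hwT, ?_⟩
  have h1 : ‖w - z‖ < δ := by rwa [← dist_eq_norm]
  have h2 : ‖q.1 - p.1‖ < δ := by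
    rw [← dist_eq_norm]
    exact lt_of_le_of_lt (by rw [Prod.dist_eq]; exact le_max_left _ _) hqb
  have h3 : ‖g - f‖ < ε := by rwa [← dist_eq_norm]
  have e1 : ‖(w - q.1) - (z - p.1)‖ ≤ 2 * δ := by
    have : (w - q.1) - (z - p.1) = (w - z) - (q.1 - p.1) := by abel
    rw [this]
    calc ‖(w - z) - (q.1 - p.1)‖ ≤ ‖w - z‖ + ‖q.1 - p.1‖ := norm_sub_le _ _
      _ ≤ 2 * δ := by linarith
  have e2 : ‖w - q.1‖ ≤ M := by
    calc ‖w - q.1‖ = ‖(z - p.1) + ((w - q.1) - (z - p.1))‖ := by congr 1; abel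
      _ ≤ ‖z - p.1‖ + ‖(w - q.1) - (z - p.1)‖ := norm_add_le _ _
      _ ≤ M := by rw [hM]; linarith
  have e3 : c - ‖f‖ * (2 * δ) ≤ f (w - q.1) := by
    have hsplit : f (w - q.1) = c + f ((w - q.1) - (z - p.1)) := by
      rw [hcdef, ← map_add]; congr 1; abel
    have hb : |f ((w - q.1) - (z - p.1))| ≤ ‖f‖ * (2 * δ) := by
      calc |f ((w - q.1) - (z - p.1))| ≤ ‖f‖ * ‖(w - q.1) - (z - p.1)‖ :=
        f.le_opNorm _
        _ ≤ ‖f‖ * (2 * δ) := by nlinarith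
    have := abs_le.mp hb
    linarith [this.1, hsplit]
  have e4 : |(g - f) (w - q.1)| ≤ ε * M := by
    calc |(g - f) (w - q.1)| ≤ ‖g - f‖ * ‖w - q.1‖ := (g - f).le_opNorm _
      _ ≤ ε * M := mul_le_mul (le_of_lt h3) e2 (norm_nonneg _) (le_of_lt hεpos)
  have hg : g (w - q.1) = f (w - q.1) + (g - f) (w - q.1) := by
    simp
  have hδ4 : δ * (4 * (‖f‖ + 1)) = c := by
    rw [hδ]; field_simp
  have hε4 : ε * (4 * (M + 1)) = c := by
    rw [hε]; field_simp
  have := abs_le.mp e4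
  rw [hg]
  nlinarith [e3, this.1, hδ4, hε4, hδpos, hεpos]
end

section
/- A real-valued function h : X → ℝ on a Banach space is lower pseudocontinuous if and only if for every x ∈ X, the sublevel set S_h(x) := {y ∈ X : h(y) ≤ h(x)} is closed. -/
/-- `h : X → ℝ` is lower pseudocontinuous iff every sublevel set
`S_h(x) = {y : h(y) ≤ h(x)}` is closed. -/
theorem lower_pseudocontinuous_iff_sublevel_closed {X : Type*} [NormedAddCommGroup X]
    [NormedSpace ℝ X] [CompleteSpace X] (h : X → ℝ) :
    (∀ x y : X, h y < h x → ∃ V ∈ nhds x, ∀ x' ∈ V, h y < h x') ↔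
    (∀ x : X, IsClosed {y : X | h y ≤ h x}) := by
  constructor
  · intro H x
    rw [← isOpen_compl_iff]
    rw [isOpen_iff_mem_nhds]
    intro z hz
    simp only [Set.mem_compl_iff, Set.mem_setOf_eq, not_le] at hz
    obtain ⟨V, hV, hVp⟩ := H z x hz
    filter_upwards [hV] with w hw
    simp only [Set.mem_compl_iff, Set.mem_setOf_eq, not_le]
    exact hVp w hw
  · intro H x y hxy
    refine ⟨{z : X | h z ≤ h y}ᶜ, ?_, ?_⟩
    · exact (H y).isOpen_compl.mem_nhds (by simpa using hxy)
    · intro x' hx'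
      simpa using hx'
end

section
/- (Solutions of the VIP are generalized Nash equilibria.) Let N be a finite set of players, 𝔛 ⊆ ℝⁿ = Π_ν ℝ^{n_ν} a nonempty set, and for each ν let θ_ν : ℝ^{n_ν} × ℝ^{−n_ν} → ℝ be upper pseudocontinuous in its own player's variable. Define D_ν(x) = conv(𝒩^<_{θ_ν}(x^ν, x^{−ν}) ∩ S_ν[0,1]) where S_ν[0,1] is the unit sphere in ℝ^{n_ν} and 𝒩^<_{θ_ν}(x^ν,x^{−ν}) := N_{{z : θ_ν(z,x^{−ν}) < θ_ν(x^ν,x^{−ν})}}(x^ν), and T(x) := Π_ν D_ν(x). If x ∈ 𝔛 and there exists w₀ ∈ T(x) with ⟨w₀, y − x⟩ ≥ 0 for all y ∈ 𝔛, then x is a generalized Nash equilibrium: for every ν and every z^ν with (z^ν, x^{−ν}) ∈ 𝔛, θ_ν(x^ν, x^{−ν}) ≤ θ_ν(z^ν, x^{−ν}). -/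
/-!
Suppose some player `ν` could strictly improve by moving from `x ν` to `z`. Upper
pseudocontinuity makes the strict sublevel set `{u | θ ν (update x ν u) < θ ν x}` a neighbourhood
of `z`, so every nonzero normal vector `v` to it at `x ν` satisfies `⟪v, z - x ν⟫ < 0`: push `z`
slightly along `v` and stay in the set. This open half-space is convex, hence contains `w₀ ν`.
Testing the variational inequality at the feasible profile `update x ν z` then gives
`0 ≤ ⟪w₀ ν, z - x ν⟫ < 0`.
-/

open Filter Topology
open scoped RealInnerProductSpace

section InnerProduct

variable {E : Type*} [NormedAddCommGroup E] [InnerProductSpace ℝ E]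

theorem inner_sub_neg_of_forall_inner_sub_nonpos {S : Set E} {x z v : E} (hS : S ∈ 𝓝 z)
    (hv : v ≠ 0) (hnormal : ∀ u ∈ S, ⟪v, u - x⟫ ≤ 0) : ⟪v, z - x⟫ < 0 := by
  have hpath : Tendsto (fun t : ℝ => z + t • v) (𝓝[>] 0) (𝓝 z) := by
    have : Continuous fun t : ℝ => z + t • v := by fun_prop
    simpa using (this.tendsto 0).mono_left nhdsWithin_le_nhds
  obtain ⟨t, hmem, ht⟩ := ((hpath.eventually hS).and eventually_mem_nhdsWithin).exists
  have hpos : 0 < t * ‖v‖ ^ 2 := mul_pos ht (by positivity)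
  have hshift : ⟪v, z + t • v - x⟫ = ⟪v, z - x⟫ + t * ‖v‖ ^ 2 := by
    rw [show z + t • v - x = (z - x) + t • v by abel, inner_add_right, real_inner_smul_right,
      real_inner_self_eq_norm_sq]
  linarith [hnormal _ hmem]

theorem inner_neg_of_mem_convexHull {A : Set E} {w y : E} (hA : ∀ v ∈ A, ⟪v, y⟫ < 0)
    (hw : w ∈ convexHull ℝ A) : ⟪w, y⟫ < 0 := by
  have hconv : Convex ℝ {v : E | ⟪v, y⟫ < 0} := by
    simp_rw [real_inner_comm y]
    exact convex_halfSpace_lt (innerₛₗ ℝ y).isLinear 0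
  exact convexHull_min hA hconv hw

end InnerProduct

theorem sum_inner_update_sub {ι : Type*} [Fintype ι] [DecidableEq ι] {E : ι → Type*}
    [∀ i, NormedAddCommGroup (E i)] [∀ i, InnerProductSpace ℝ (E i)] (w x : ∀ i, E i) (i : ι)
    (z : E i) : ∑ j, ⟪w j, Function.update x i z j - x j⟫ = ⟪w i, z - x i⟫ := by
  rw [Finset.sum_eq_single i (fun j _ hj => by simp [Function.update_of_ne hj]) (by simp)]
  simp

theorem vip_solution_is_gne_general {N : Type*} [Fintype N] [DecidableEq N] (n : N → ℕ)
    (𝔛 : Set ((ν : N) → EuclideanSpace ℝ (Fin (n ν))))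
    (θ : N → ((ν : N) → EuclideanSpace ℝ (Fin (n ν))) → ℝ)
    (hupc : ∀ (ν : N) (x : (ν : N) → EuclideanSpace ℝ (Fin (n ν)))
      (u z : EuclideanSpace ℝ (Fin (n ν))),
      θ ν (Function.update x ν z) > θ ν (Function.update x ν u) →
      ∃ V ∈ nhds u, ∀ u' ∈ V, θ ν (Function.update x ν z) > θ ν (Function.update x ν u'))
    (x : (ν : N) → EuclideanSpace ℝ (Fin (n ν)))
    (w₀ : (ν : N) → EuclideanSpace ℝ (Fin (n ν)))
    (hw₀ : ∀ ν : N, w₀ ν ∈ convexHull ℝ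
      ({v : EuclideanSpace ℝ (Fin (n ν)) |
          ∀ z, θ ν (Function.update x ν z) < θ ν x → inner ℝ v (z - x ν) ≤ (0 : ℝ)}
        ∩ Metric.sphere (0 : EuclideanSpace ℝ (Fin (n ν))) 1))
    (hvip : ∀ y ∈ 𝔛, 0 ≤ ∑ ν : N, (inner ℝ (w₀ ν) (y ν - x ν) : ℝ)) :
    ∀ (ν : N) (z : EuclideanSpace ℝ (Fin (n ν))),
      Function.update x ν z ∈ 𝔛 → θ ν x ≤ θ ν (Function.update x ν z) := by
  intro ν z hz
  by_contra! himproves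
  have hsublevel : {u | θ ν (Function.update x ν u) < θ ν x} ∈ 𝓝 z := by
    obtain ⟨V, hV, hVlt⟩ := hupc ν x z (x ν) (by rwa [Function.update_eq_self])
    filter_upwards [hV] with u hu
    simpa using hVlt u hu
  have hdescent : ⟪w₀ ν, z - x ν⟫ < 0 :=
    inner_neg_of_mem_convexHull
      (fun v hv => inner_sub_neg_of_forall_inner_sub_nonpos hsublevel
        (ne_zero_of_mem_unit_sphere ⟨v, hv.2⟩) hv.1) (hw₀ ν)
  have hvip_z := hvip _ hz
  rw [sum_inner_update_sub] at hvip_z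
  linarith

/-- Solutions of the variational inequality associated to `T(x) = Π_ν D_ν(x)`, where
`D_ν(x) = conv(𝒩^<_{θ_ν}(x) ∩ S_ν[0,1])`, are generalized Nash equilibria of the jointly
convex GNEP, provided each loss function is upper pseudocontinuous in its own variable. -/
theorem vip_solution_is_gne {N : Type*} [Fintype N] [DecidableEq N] (n : N → ℕ)
    (𝔛 : Set ((ν : N) → EuclideanSpace ℝ (Fin (n ν)))) (h𝔛 : 𝔛.Nonempty)
    (θ : N → ((ν : N) → EuclideanSpace ℝ (Fin (n ν))) → ℝ)
    (hupc : ∀ (ν : N) (x : (ν : N) → EuclideanSpace ℝ (Fin (n ν)))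
      (u z : EuclideanSpace ℝ (Fin (n ν))),
      θ ν (Function.update x ν z) > θ ν (Function.update x ν u) →
      ∃ V ∈ nhds u, ∀ u' ∈ V, θ ν (Function.update x ν z) > θ ν (Function.update x ν u'))
    (x : (ν : N) → EuclideanSpace ℝ (Fin (n ν))) (hx : x ∈ 𝔛)
    (w₀ : (ν : N) → EuclideanSpace ℝ (Fin (n ν)))
    (hw₀ : ∀ ν : N, w₀ ν ∈ convexHull ℝ
      ({v : EuclideanSpace ℝ (Fin (n ν)) |
          ∀ z, θ ν (Function.update x ν z) < θ ν x → inner ℝ v (z - x ν) ≤ (0 : ℝ)}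
        ∩ Metric.sphere (0 : EuclideanSpace ℝ (Fin (n ν))) 1))
    (hvip : ∀ y ∈ 𝔛, 0 ≤ ∑ ν : N, (inner ℝ (w₀ ν) (y ν - x ν) : ℝ)) :
    ∀ (ν : N) (z : EuclideanSpace ℝ (Fin (n ν))),
      Function.update x ν z ∈ 𝔛 → θ ν x ≤ θ ν (Function.update x ν z) :=
  vip_solution_is_gne_general n 𝔛 θ hupc x w₀ hw₀ hvip
end
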